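/- arXiv:2205.04036 — 2 statements merged into one kernel-verified Lean document; each statement's English description precedes it below -/
import Mathlib

section
/- For a monotone submodular function g : Finset α → ℝ≥0 with g(∅) = 0, the greedy algorithm that iteratively adds the element maximizing marginal gain, run for k steps, produces a set G with g(G) ≥ (1 − (1 − 1/k)^k) · g(OPT) ≥ (1 − 1/e) · g(OPT), where OPT is any set of size at most k. -/
/-- Greedy for monotone submodular maximization under a cardinality constraint achieves
a `1 - (1 - 1/k)^k ≥ 1 - 1/e` approximation. -/
theorem greedy_submodular_approximation {α : Type*} [DecidableEq α] (g : Finset α → ℝ)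
    (hg0 : g ∅ = 0) (hnn : ∀ A, 0 ≤ g A)
    (hmono : ∀ A B : Finset α, A ⊆ B → g A ≤ g B)
    (hsub : ∀ (A B : Finset α) (x : α), A ⊆ B → x ∉ B →
      g (insert x B) - g B ≤ g (insert x A) - g A)
    (k : ℕ) (hk : 0 < k)
    (G : ℕ → Finset α) (hG0 : G 0 = ∅)
    (hstep : ∀ n, ∃ x, G (n + 1) = insert x (G n) ∧
      ∀ y, g (insert y (G n)) - g (G n) ≤ g (insert x (G n)) - g (G n))
    (OPT : Finset α) (hOPT : OPT.card ≤ k) :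
    (1 - (1 - 1 / (k : ℝ)) ^ k) * g OPT ≤ g (G k) ∧
      (1 - 1 / Real.exp 1) * g OPT ≤ (1 - (1 - 1 / (k : ℝ)) ^ k) * g OPT := by
  have hk' : (0:ℝ) < k := by exact_mod_cast hk
  have hgain : ∀ n, 0 ≤ g (G (n+1)) - g (G n) := by
    intro n
    obtain ⟨x, hx, -⟩ := hstep n
    rw [hx]
    have := hmono (G n) (insert x (G n)) (Finset.subset_insert _ _)
    linarith
  have key : ∀ (S A : Finset α), g (S ∪ A) - g A ≤ ∑ x ∈ S, (g (insert x A) - g A) := by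
    intro S A
    induction S using Finset.induction_on with
    | empty => simp
    | @insert x S hxS ih =>
      rw [Finset.sum_insert hxS, Finset.insert_union]
      by_cases hxSA : x ∈ S ∪ A
      · rw [Finset.insert_eq_self.mpr hxSA]
        have h1 : 0 ≤ g (insert x A) - g A := by
          have := hmono A (insert x A) (Finset.subset_insert _ _); linarith
        linarith
      · have h1 := hsub A (S ∪ A) x Finset.subset_union_right hxSA
        linarith
  have step : ∀ n, g OPT - g (G n) ≤ (k : ℝ) * (g (G (n+1)) - g (G n)) := by
    intro n
    obtain ⟨x, hx, hmax⟩ := hstep n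
    have h1 : g OPT ≤ g (OPT ∪ G n) := hmono _ _ Finset.subset_union_left
    have h2 := key OPT (G n)
    have h3 : ∑ y ∈ OPT, (g (insert y (G n)) - g (G n)) ≤
        ∑ _y ∈ OPT, (g (G (n+1)) - g (G n)) := by
      apply Finset.sum_le_sum
      intro y _
      rw [hx]; exact hmax y
    rw [Finset.sum_const, nsmul_eq_mul] at h3
    have h4 : (OPT.card : ℝ) * (g (G (n+1)) - g (G n)) ≤ (k : ℝ) * (g (G (n+1)) - g (G n)) := by
      apply mul_le_mul_of_nonneg_right _ (hgain n)
      exact_mod_cast hOPT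
    linarith
  have hr : (0:ℝ) ≤ 1 - 1/(k:ℝ) := by
    rw [sub_nonneg, div_le_one hk']
    exact_mod_cast hk
  have main : ∀ n, g OPT - g (G n) ≤ (1 - 1/(k:ℝ))^n * g OPT := by
    intro n
    induction n with
    | zero => simp [hG0, hg0]
    | succ n ih =>
      have hs := step n
      have hdiv : (g OPT - g (G n)) / k ≤ g (G (n+1)) - g (G n) := by
        rw [div_le_iff₀ hk']
        nlinarith
      have hexp : (1 - 1/(k:ℝ)) * (g OPT - g (G n)) =
          (g OPT - g (G n)) - (g OPT - g (G n)) / k := by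
        field_simp
      have h1 : g OPT - g (G (n+1)) ≤ (1 - 1/(k:ℝ)) * (g OPT - g (G n)) := by
        rw [hexp]; linarith
      have h2 : (1 - 1/(k:ℝ)) * (g OPT - g (G n)) ≤
          (1 - 1/(k:ℝ)) * ((1 - 1/(k:ℝ))^n * g OPT) :=
        mul_le_mul_of_nonneg_left ih hr
      calc g OPT - g (G (n+1)) ≤ (1 - 1/(k:ℝ)) * ((1 - 1/(k:ℝ))^n * g OPT) := le_trans h1 h2
        _ = (1 - 1/(k:ℝ))^(n+1) * g OPT := by ring
  constructor
  · have h := main k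
    have : (1 - (1 - 1/(k:ℝ))^k) * g OPT = g OPT - (1 - 1/(k:ℝ))^k * g OPT := by ring
    rw [this]; linarith
  · apply mul_le_mul_of_nonneg_right _ (hnn OPT)
    have h1 : (1 - 1/(k:ℝ)) ≤ Real.exp (-(1/(k:ℝ))) := by
      have := Real.add_one_le_exp (-(1/(k:ℝ)))
      linarith
    have h2 : (1 - 1/(k:ℝ))^k ≤ (Real.exp (-(1/(k:ℝ))))^k :=
      pow_le_pow_left₀ hr h1 k
    have h3 : (Real.exp (-(1/(k:ℝ))))^k = Real.exp (-1) := by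
      rw [← Real.exp_nat_mul]
      congr 1
      field_simp
    rw [h3] at h2
    have h4 : Real.exp (-1) = 1 / Real.exp 1 := by
      rw [Real.exp_neg]; exact inv_eq_one_div _
    rw [h4] at h2
    linarith
end

section
/- Let g be a monotone submodular set function with g(∅)=0 and let each element x have cost c(x) > 0. The cost-benefit greedy (repeatedly adding the feasible element maximizing marginal gain divided by cost, until budget B is exhausted) combined with taking the best single feasible element achieves benefit at least (1/2)(1 − 1/e) times the optimal benefit among sets of cost at most B. -/
/-- The cost-benefit greedy for a monotone submodular function under a knapsack (budget)
constraint, combined with the best feasible singleton, achieves at least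
`(1/2)(1 − 1/e)` of the optimal benefit. -/
theorem cost_benefit_greedy_approximation {α : Type*} [DecidableEq α]
    (g : Finset α → ℝ) (cost : α → ℝ) (B : ℝ) (hB : 0 < B) (hcost : ∀ x, 0 < cost x)
    (hg0 : g ∅ = 0) (hnn : ∀ A, 0 ≤ g A)
    (hmono : ∀ A A' : Finset α, A ⊆ A' → g A ≤ g A')
    (hsub : ∀ (A A' : Finset α) (x : α), A ⊆ A' → x ∉ A' →
      g (insert x A') - g A' ≤ g (insert x A) - g A)
    (G : ℕ → Finset α) (hG0 : G 0 = ∅)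
    (hstep : ∀ n,
      (G (n + 1) = G n ∧ ∀ x ∉ G n, ¬ (∑ y ∈ insert x (G n), cost y ≤ B)) ∨
      (∃ x ∉ G n, (∑ y ∈ insert x (G n), cost y ≤ B) ∧ G (n + 1) = insert x (G n) ∧
        ∀ y ∉ G n, (∑ z ∈ insert y (G n), cost z ≤ B) →
          (g (insert y (G n)) - g (G n)) / cost y ≤
            (g (insert x (G n)) - g (G n)) / cost x))
    (N : ℕ) (hterm : ∀ x ∉ G N, ¬ (∑ y ∈ insert x (G N), cost y ≤ B))
    (best : α) (hbestfeas : cost best ≤ B)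
    (hbest : ∀ x, cost x ≤ B → g {x} ≤ g {best}) :
    ∀ OPT : Finset α, (∑ x ∈ OPT, cost x ≤ B) →
      1 / 2 * (1 - 1 / Real.exp 1) * g OPT ≤ max (g (G N)) (g {best}) := by
  intro OPT hOPT
  have hCnn : ∀ S : Finset α, 0 ≤ ∑ y ∈ S, cost y :=
    fun S => Finset.sum_nonneg (fun y _ => (hcost y).le)
  -- easy case: g OPT ≤ max
  by_cases hcase : g OPT ≤ max (g (G N)) (g {best})
  · have he2 : (2:ℝ) ≤ Real.exp 1 := by
      have := Real.add_one_le_exp (1:ℝ); linarith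
    have hepos : (0:ℝ) < Real.exp 1 := Real.exp_pos 1
    have h1e : 1 / Real.exp 1 ≤ 1 / 2 := by
      apply one_div_le_one_div_of_le <;> linarith
    have h1epos : 0 < 1 / Real.exp 1 := by positivity
    nlinarith [hnn OPT]
  push_neg at hcase
  have hltN : g (G N) < g OPT := lt_of_le_of_lt (le_max_left _ _) hcase
  have hltb : g {best} < g OPT := lt_of_le_of_lt (le_max_right _ _) hcase
  -- monotonicity of G
  have hGstep : ∀ n, G n ⊆ G (n+1) := by
    intro n
    rcases hstep n with ⟨h, _⟩ | ⟨x, _, _, h, _⟩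
    · rw [h]
    · rw [h]; exact Finset.subset_insert _ _
  have hGle : ∀ m n, m ≤ n → G m ⊆ G n := by
    intro m n hmn
    induction hmn with
    | refl => exact subset_rfl
    | step h ih => exact ih.trans (hGstep _)
  have hnotsub : ∀ k, k ≤ N → ¬ OPT ⊆ G k := by
    intro k hk hsubk
    have h1 : g OPT ≤ g (G k) := hmono _ _ hsubk
    have h2 : g (G k) ≤ g (G N) := hmono _ _ (hGle k N hk)
    linarith
  -- submodular expansion lemma
  have hexpand : ∀ (S T : Finset α), Disjoint S T →
      g (T ∪ S) - g T ≤ ∑ y ∈ S, (g (insert y T) - g T) := by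
    intro S
    induction S using Finset.induction_on with
    | empty => intro T _; simp
    | @insert a S' ha ih =>
      intro T hdisj
      have haT : a ∉ T := by
        have := Finset.disjoint_left.mp hdisj (Finset.mem_insert_self a S')
        exact this
      have hdisj' : Disjoint S' T :=
        Finset.disjoint_of_subset_left (Finset.subset_insert a S') hdisj
      have haTS : a ∉ T ∪ S' := by
        simp only [Finset.mem_union]
        push_neg
        exact ⟨haT, ha⟩
      have h1 : g (insert a (T ∪ S')) - g (T ∪ S') ≤ g (insert a T) - g T :=
        hsub T (T ∪ S') a Finset.subset_union_left haTS
      have h2 := ih T hdisj'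
      have h3 : T ∪ insert a S' = insert a (T ∪ S') := Finset.union_insert a T S'
      rw [h3, Finset.sum_insert ha]
      linarith
  -- the argmax lemma
  have hkey : ∀ S : Finset α, ¬ OPT ⊆ S → ∃ xs, xs ∈ OPT ∧ xs ∉ S ∧
      g OPT - g S ≤ B * ((g (insert xs S) - g S) / cost xs) := by
    intro S hns
    have hne : (OPT \ S).Nonempty := by rwa [Finset.sdiff_nonempty]
    obtain ⟨xs, hxmem, hxmax⟩ :=
      Finset.exists_max_image (OPT \ S) (fun y => (g (insert y S) - g S) / cost y) hne
    refine ⟨xs, (Finset.mem_sdiff.mp hxmem).1, (Finset.mem_sdiff.mp hxmem).2, ?_⟩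
    have h1 : g OPT - g S ≤ g (S ∪ (OPT \ S)) - g S := by
      have hsub' : OPT ⊆ S ∪ (OPT \ S) := by
        intro a ha
        by_cases haS : a ∈ S
        · exact Finset.mem_union_left _ haS
        · exact Finset.mem_union_right _ (Finset.mem_sdiff.mpr ⟨ha, haS⟩)
      linarith [hmono OPT (S ∪ (OPT \ S)) hsub']
    have h2 := hexpand (OPT \ S) S Finset.sdiff_disjoint
    have hr0 : 0 ≤ (g (insert xs S) - g S) / cost xs := by
      apply div_nonneg _ (hcost xs).le
      linarith [hmono S (insert xs S) (Finset.subset_insert _ _)]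
    have h4 : ∑ y ∈ OPT \ S, (g (insert y S) - g S) ≤
        ∑ y ∈ OPT \ S, cost y * ((g (insert xs S) - g S) / cost xs) := by
      apply Finset.sum_le_sum
      intro y hy
      have hy' : g (insert y S) - g S = cost y * ((g (insert y S) - g S) / cost y) := by
        rw [mul_div_assoc']
        rw [mul_comm, mul_div_assoc, div_self (hcost y).ne', mul_one]
      rw [hy']
      exact mul_le_mul_of_nonneg_left (hxmax y hy) (hcost y).le
    have h5 : ∑ y ∈ OPT \ S, cost y * ((g (insert xs S) - g S) / cost xs) =
        (∑ y ∈ OPT \ S, cost y) * ((g (insert xs S) - g S) / cost xs) :=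
      (Finset.sum_mul _ _ _).symm
    have h6 : ∑ y ∈ OPT \ S, cost y ≤ B := by
      refine le_trans ?_ hOPT
      exact Finset.sum_le_sum_of_subset_of_nonneg (Finset.sdiff_subset)
        (fun y _ _ => (hcost y).le)
    have h7 := mul_le_mul_of_nonneg_right h6 hr0
    rw [h5] at h4
    linarith
  -- algebra lemma for one step
  have halg : ∀ (S : Finset α) (x : α), x ∉ S → cost x ≤ B → 0 ≤ g OPT - g S →
      g OPT - g S ≤ g OPT * Real.exp (-(∑ y ∈ S, cost y) / B) →
      g OPT - g S ≤ B * ((g (insert x S) - g S) / cost x) →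
      g OPT - g (insert x S) ≤ g OPT * Real.exp (-((∑ y ∈ S, cost y) + cost x) / B) := by
    intro S x hx hxB hD hinv hr
    have hcx := hcost x
    have h1 : (g OPT - g S) * cost x ≤ B * (g (insert x S) - g S) := by
      rw [← mul_div_assoc] at hr
      exact (le_div_iff₀ hcx).mp hr
    have h2 : (g OPT - g S) * cost x / B ≤ g (insert x S) - g S :=
      (div_le_iff₀ hB).mpr (by linarith)
    have hstep2 : 1 - cost x / B ≤ Real.exp (-(cost x / B)) := by
      linarith [Real.add_one_le_exp (-(cost x / B))]
    have h3 : (g OPT - g S) * (1 - cost x / B) ≤ (g OPT - g S) * Real.exp (-(cost x / B)) :=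
      mul_le_mul_of_nonneg_left hstep2 hD
    have h4 : (g OPT - g S) * Real.exp (-(cost x / B)) ≤
        g OPT * Real.exp (-(∑ y ∈ S, cost y) / B) * Real.exp (-(cost x / B)) :=
      mul_le_mul_of_nonneg_right hinv (Real.exp_pos _).le
    have hexp : Real.exp (-(∑ y ∈ S, cost y) / B) * Real.exp (-(cost x / B)) =
        Real.exp (-((∑ y ∈ S, cost y) + cost x) / B) := by
      rw [← Real.exp_add]
      congr 1
      ring
    have h5 : g OPT - g (insert x S) ≤ (g OPT - g S) * (1 - cost x / B) := by
      have heq : (g OPT - g S) * (1 - cost x / B) =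
          (g OPT - g S) - (g OPT - g S) * cost x / B := by ring
      rw [heq]
      linarith
    rw [mul_assoc, hexp] at h4
    linarith
  -- finishing lemma
  have hfinish : ∀ (S : Finset α) (x : α), x ∉ S → S ⊆ G N → cost x ≤ B →
      B < (∑ y ∈ S, cost y) + cost x →
      g OPT - g (insert x S) ≤ g OPT * Real.exp (-((∑ y ∈ S, cost y) + cost x) / B) →
      1 / 2 * (1 - 1 / Real.exp 1) * g OPT ≤ max (g (G N)) (g {best}) := by
    intro S x hx hSsub hxB hbud hineq
    have hexple : Real.exp (-((∑ y ∈ S, cost y) + cost x) / B) ≤ Real.exp (-1) := by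
      apply Real.exp_le_exp.mpr
      rw [neg_div]
      apply neg_le_neg
      rw [le_div_iff₀ hB]
      linarith
    have h1 : g OPT * Real.exp (-((∑ y ∈ S, cost y) + cost x) / B) ≤
        g OPT * Real.exp (-1) := mul_le_mul_of_nonneg_left hexple (hnn OPT)
    have h2 : Real.exp (-1 : ℝ) = (Real.exp 1)⁻¹ := Real.exp_neg 1
    have hsingle : g (insert x S) - g S ≤ g {x} := by
      have := hsub ∅ S x (Finset.empty_subset S) hx
      simpa [hg0] using this
    have h3 : g S ≤ g (G N) := hmono _ _ hSsub
    have h4 : g {x} ≤ g {best} := hbest x hxB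
    have hm1 : g (G N) ≤ max (g (G N)) (g {best}) := le_max_left _ _
    have hm2 : g {best} ≤ max (g (G N)) (g {best}) := le_max_right _ _
    rw [h2] at h1
    have hA : g OPT - g OPT * (Real.exp 1)⁻¹ ≤ g (insert x S) := by linarith
    have hB2 : g (insert x S) ≤ g (G N) + g {best} := by linarith
    have hEq : 1 / 2 * (1 - 1 / Real.exp 1) * g OPT =
        (g OPT - g OPT * (Real.exp 1)⁻¹) / 2 := by ring
    rw [hEq]
    linarith
  -- main induction
  have hmain : ∀ k, k ≤ N →
      (∃ S : Finset α, ∃ x : α, x ∉ S ∧ S ⊆ G N ∧ cost x ≤ B ∧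
        B < (∑ y ∈ S, cost y) + cost x ∧
        g OPT - g (insert x S) ≤ g OPT * Real.exp (-((∑ y ∈ S, cost y) + cost x) / B)) ∨
      (g OPT - g (G k) ≤ g OPT * Real.exp (-(∑ y ∈ G k, cost y) / B)) := by
    intro k
    induction k with
    | zero =>
      intro _
      right
      simp [hG0, hg0]
    | succ k ih =>
      intro hk1
      have hk : k ≤ N := Nat.le_of_succ_le hk1
      rcases ih hk with hclaim | hinv
      · exact Or.inl hclaim
      obtain ⟨xs, hxsO, hxsG, hxsineq⟩ := hkey (G k) (hnotsub k hk)
      have hD : 0 ≤ g OPT - g (G k) := by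
        have := hmono (G k) (G N) (hGle k N hk)
        linarith
      by_cases hfeas : ∑ y ∈ insert xs (G k), cost y ≤ B
      · -- a greedy step occurs
        rcases hstep k with ⟨_, hall⟩ | ⟨x, hxG, hxf, hGsucc, hmax⟩
        · exact absurd hfeas (hall xs hxsG)
        · right
          have hratio := hmax xs hxsG hfeas
          have h2 : g OPT - g (G k) ≤ B * ((g (insert x (G k)) - g (G k)) / cost x) :=
            le_trans hxsineq (mul_le_mul_of_nonneg_left hratio hB.le)
          have hcxB : cost x ≤ B := by
            rw [Finset.sum_insert hxG] at hxf
            linarith [hCnn (G k)]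
          have hres := halg (G k) x hxG hcxB hD hinv h2
          rw [hGsucc, Finset.sum_insert hxG, add_comm (cost x)]
          exact hres
      · -- the argmax optimal element is infeasible
        left
        have hcxsB : cost xs ≤ B := by
          have h1 : cost xs ≤ ∑ y ∈ OPT, cost y :=
            Finset.single_le_sum (fun y _ => (hcost y).le) hxsO
          linarith
        refine ⟨G k, xs, hxsG, hGle k N hk, hcxsB, ?_, ?_⟩
        · rw [Finset.sum_insert hxsG] at hfeas
          push_neg at hfeas
          linarith
        · exact halg (G k) xs hxsG hcxsB hD hinv hxsineq
  rcases hmain N le_rfl with ⟨S, x, hx, hSsub, hxB, hbud, hineq⟩ | hinv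
  · exact hfinish S x hx hSsub hxB hbud hineq
  · obtain ⟨xs, hxsO, hxsG, hxsineq⟩ := hkey (G N) (hnotsub N le_rfl)
    have hD : 0 ≤ g OPT - g (G N) := by linarith
    have hfeas := hterm xs hxsG
    have hcxsB : cost xs ≤ B := by
      have h1 : cost xs ≤ ∑ y ∈ OPT, cost y :=
        Finset.single_le_sum (fun y _ => (hcost y).le) hxsO
      linarith
    have hbud : B < (∑ y ∈ G N, cost y) + cost xs := by
      rw [Finset.sum_insert hxsG] at hfeas
      push_neg at hfeas
      linarith
    exact hfinish (G N) xs hxsG subset_rfl hcxsB hbud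
      (halg (G N) xs hxsG hcxsB hD hinv hxsineq)
end
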